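/- arXiv:0710.3536 — 3 statements merged into one kernel-verified Lean document; each statement's English description precedes it below -/
import Mathlib

section
/- Suppose each property φ_i is monotonic. Then for every belief model for the initial game H, the restriction of H to the event RAT(φ) ∩ B*RAT(φ) is included (componentwise) in the outcome T_φ^∞ of the iterated elimination operator T_φ; that is, G_{RAT(φ) ∩ B*RAT(φ)} ⊆ T_φ^∞. -/
/-!
Epistemic analysis of arbitrary strategic games. The initial game `H` has
players `ι`, strategy sets `S i` (the full types, all nonempty) and payoff
functions `p i`. A restriction of `H` is a family `G : ∀ i, Set (S i)`,
ordered componentwise; this is a complete lattice with largest element `⊤ = H`.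
-/

open Set

universe u

/-- The `o`-th transfinite iterate of `T`, starting from `⊤ = H`. -/
noncomputable def lfpIter {D : Type u} [CompleteLattice D] (T : D → D) (o : Ordinal.{u}) : D :=
  Ordinal.limitRecOn (motive := fun _ => D) o ⊤ (fun _ ih => T ih)
    (fun o _ ih => ⨅ o' : {o' : Ordinal.{u} // o' < o}, ih o'.1 o'.2)

/-- The outcome `T^∞` of (iterating) `T`. -/
noncomputable def outcome {D : Type u} [CompleteLattice D] (T : D → D) : D :=
  lfpIter T (sInf {α : Ordinal.{u} | lfpIter T (α + 1) = lfpIter T α})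

/-- The operator `T_φ` of iterated elimination of strategies that are not `φ_i`-optimal:
`T_φ(G)_i = {s_i ∈ G_i | φ_i(s_i, G)}`. -/
def Topr {ι : Type u} {S : ι → Type u} (φ : ∀ i, S i → (∀ j, Set (S j)) → Prop)
    (G : ∀ i, Set (S i)) : ∀ i, Set (S i) :=
  fun i => {s | s ∈ G i ∧ φ i s G}

/-- `□E`: the event that every player believes the event `E`. -/
def box {ι Ω : Type u} (P : ι → Ω → Set Ω) (E : Set Ω) : Set Ω :=
  {ω | ∀ i, P i ω ⊆ E}

/-- `B*E`: the common belief event, `⋂_{k ≥ 1} □^k E`. -/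
def commonBelief {ι Ω : Type u} (P : ι → Ω → Set Ω) (E : Set Ω) : Set Ω :=
  ⋂ k : ℕ, (box P)^[k + 1] E

/-- `G_E`: the restriction of the game to the event `E`, given by the images of `E`
under the strategy functions `s̄_i`. -/
def restrOf {ι Ω : Type u} {S : ι → Type u} (sb : ∀ i, Ω → S i) (E : Set Ω) :
    ∀ i, Set (S i) := fun i => sb i '' E

/-- `RAT(φ)`: the event that each player `i` is `φ_i`-rational, i.e. that
`φ_i(s̄_i(ω), G_{P_i(ω)})` holds for every player `i`. -/
def RAT {ι Ω : Type u} {S : ι → Type u} (φ : ∀ i, S i → (∀ j, Set (S j)) → Prop)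
    (sb : ∀ i, Ω → S i) (P : ι → Ω → Set Ω) : Set Ω :=
  {ω | ∀ i, φ i (sb i ω) (restrOf sb (P i ω))}

/-!
At a state of `E = RAT(φ) ∩ B*RAT(φ)` every player believes `E` itself, so the restriction
`G_{P_i(ω)}` a player is rational against lies inside `G_E`; by monotonicity of `φ_i` this makes
`G_E` a post-fixpoint of `T_φ`. A post-fixpoint of a monotone operator stays below every
transfinite iterate from the top, hence below the outcome.
-/

section Iteration

variable {D : Type u} [CompleteLattice D] {T : D → D}

lemma le_lfpIter (hT : Monotone T) {A : D} (hA : A ≤ T A) (o : Ordinal.{u}) :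
    A ≤ lfpIter T o := by
  induction o using Ordinal.limitRecOn with
  | zero => simp [lfpIter]
  | add_one o ih =>
    rw [lfpIter, Ordinal.limitRecOn_add_one]
    exact hA.trans (hT ih)
  | limit o ho ih =>
    rw [lfpIter, Ordinal.limitRecOn_limit _ _ _ _ ho]
    exact le_iInf fun o' => ih o'.1 o'.2

lemma le_outcome (hT : Monotone T) {A : D} (hA : A ≤ T A) : A ≤ outcome T :=
  le_lfpIter hT hA _

end Iteration

lemma commonBelief_subset_box_inter {ι Ω : Type u} (P : ι → Ω → Set Ω) (E : Set Ω) :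
    commonBelief P E ⊆ box P (E ∩ commonBelief P E) := by
  intro ω hω i ω' hω'
  have hiter : ∀ k : ℕ, ω ∈ (box P)^[k + 1] E := fun k => mem_iInter.1 hω k
  refine ⟨hiter 0 i hω', mem_iInter.2 fun k => ?_⟩
  have hk := hiter (k + 1)
  rw [Function.iterate_succ_apply'] at hk
  exact hk i hω'

section Elimination

variable {ι : Type u} {S : ι → Type u} {φ : ∀ i, S i → (∀ j, Set (S j)) → Prop}

lemma Topr_monotone
    (hmono : ∀ i (s : S i) (G G' : ∀ j, Set (S j)), G ≤ G' → φ i s G → φ i s G') :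
    Monotone (Topr φ) :=
  fun G G' hG i s hs => ⟨hG i hs.1, hmono i s G G' hG hs.2⟩

lemma restrOf_le_Topr_restrOf {Ω : Type u} {sb : ∀ i, Ω → S i} {P : ι → Ω → Set Ω}
    (hmono : ∀ i (s : S i) (G G' : ∀ j, Set (S j)), G ≤ G' → φ i s G → φ i s G')
    {E : Set Ω} (hE : E ⊆ RAT φ sb P ∩ box P E) :
    restrOf sb E ≤ Topr φ (restrOf sb E) := by
  rintro i _ ⟨ω, hω, rfl⟩
  exact ⟨⟨ω, hω, rfl⟩, hmono i _ _ _ (fun j => image_mono ((hE hω).2 i)) ((hE hω).1 i)⟩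

end Elimination

theorem restr_RAT_inter_commonBelief_le_outcome_general {ι : Type u} {S : ι → Type u}
    {Ω : Type u} (sb : ∀ i, Ω → S i) (P : ι → Ω → Set Ω)
    (φ : ∀ i, S i → (∀ j, Set (S j)) → Prop)
    (hmono : ∀ i (s : S i) (G G' : ∀ j, Set (S j)), G ≤ G' → φ i s G → φ i s G') :
    restrOf sb (RAT φ sb P ∩ commonBelief P (RAT φ sb P)) ≤ outcome (Topr φ) := by
  have hself_evident : RAT φ sb P ∩ commonBelief P (RAT φ sb P)
      ⊆ RAT φ sb P ∩ box P (RAT φ sb P ∩ commonBelief P (RAT φ sb P)) :=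
    fun ω hω => ⟨hω.1, commonBelief_subset_box_inter P _ hω.2⟩
  exact le_outcome (Topr_monotone hmono) (restrOf_le_Topr_restrOf hmono hself_evident)

/-- if each `φ_i` is monotonic, then for every belief model
`(Ω, s̄, P)` for the initial game `H`,
`G_{RAT(φ) ∩ B*RAT(φ)} ⊆ T_φ^∞` (componentwise). -/
theorem restr_RAT_inter_commonBelief_le_outcome {ι : Type u} {S : ι → Type u}
    [∀ i, Nonempty (S i)] (p : ∀ i : ι, (∀ j, S j) → ℝ)
    {Ω : Type u} [Nonempty Ω] (sb : ∀ i, Ω → S i) (P : ι → Ω → Set Ω)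
    (hP1 : ∀ i ω, (P i ω).Nonempty)
    (hP2 : ∀ i ω ω', ω' ∈ P i ω → P i ω' = P i ω)
    (φ : ∀ i, S i → (∀ j, Set (S j)) → Prop)
    (hmono : ∀ i (s : S i) (G G' : ∀ j, Set (S j)), G ≤ G' → φ i s G → φ i s G') :
    restrOf sb (RAT φ sb P ∩ commonBelief P (RAT φ sb P)) ≤ outcome (Topr φ) :=
  restr_RAT_inter_commonBelief_le_outcome_general sb P φ hmono
end

section
/- Assume the initial game H is finite. For every knowledge model for H, G_{K*RAT(br^g)} ⊆ T_{msd^l}^∞: common knowledge that each player plays a best response (within H_i, to some joint mixed strategy of the opponents he considers possible) implies that the players choose only strategies that survive the iterated elimination of strategies strictly dominated by a mixed strategy. -/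
/-!
Epistemic analysis of arbitrary strategic games. The initial game `H` has
players `ι`, strategy sets `S i` (the full types, all nonempty) and payoff
functions `p i`. A restriction of `H` is a family `G : ∀ i, Set (S i)`,
ordered componentwise; this is a complete lattice with largest element `⊤ = H`.
-/

open Set

universe u

/-- `m` is a probability distribution over the subset `A` of player strategies:
nonnegative, sums to `1`, and supported in `A`. -/
def IsDistOn {α : Type u} [Fintype α] (A : Set α) (m : α → ℝ) : Prop :=
  (∀ s, 0 ≤ m s) ∧ (∑ s, m s = 1) ∧ ∀ s, m s ≠ 0 → s ∈ A

/-- The full strategy profile obtained from player `i`'s strategy `si` and a joint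
strategy `t` of his opponents. -/
def extProf {ι : Type u} [DecidableEq ι] {S : ι → Type u} (i : ι) (si : S i)
    (t : ∀ j : {j : ι // j ≠ i}, S j.1) : ∀ j, S j :=
  fun j => if h : j = i then cast (congrArg S h.symm) si else t ⟨j, h⟩

/-- Expected payoff `p_i(si, μ)` of player `i` playing `si` against the joint mixed
strategy `μ = (m_j)_{j ≠ i}` of his opponents (entry `i` of `μ` is ignored):
`Σ_{s_{-i}} (Π_{j ≠ i} m_j(s_j)) p_i(si, s_{-i})`. -/
def jointMixedPayoff {ι : Type u} [Fintype ι] [DecidableEq ι] {S : ι → Type u}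
    [∀ i, Fintype (S i)] (p : ∀ i : ι, (∀ j, S j) → ℝ) (i : ι) (si : S i)
    (μ : ∀ j, S j → ℝ) : ℝ :=
  ∑ t : ∀ j : {j : ι // j ≠ i}, S j.1,
    (∏ j : {j : ι // j ≠ i}, μ j.1 (t j)) * p i (extProf i si t)

/-- `br^g_i(s, G)` with mixed beliefs: `s` is a best response in `H_i` to some joint
mixed strategy `μ = (m_j)_{j ≠ i}` of the opponents with `m_j ∈ Δ G_j`. -/
def brgMixed {ι : Type u} [Fintype ι] [DecidableEq ι] {S : ι → Type u}
    [∀ i, Fintype (S i)] (p : ∀ i : ι, (∀ j, S j) → ℝ) (i : ι) (s : S i)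
    (G : ∀ j, Set (S j)) : Prop :=
  ∃ μ : ∀ j, S j → ℝ, (∀ j, j ≠ i → IsDistOn (G j) (μ j)) ∧
    ∀ s' : S i, jointMixedPayoff p i s' μ ≤ jointMixedPayoff p i s μ

/-- Expected payoff of the mixed strategy `m` of player `i` against the joint
strategy of the opponents given by the profile `t` (entry `i` of `t` is ignored). -/
def mixedPayoff {ι : Type u} [Fintype ι] [DecidableEq ι] {S : ι → Type u}
    [∀ i, Fintype (S i)] (p : ∀ i : ι, (∀ j, S j) → ℝ) (i : ι) (m : S i → ℝ)
    (t : ∀ j, S j) : ℝ :=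
  ∑ s : S i, m s * p i (Function.update t i s)

/-- `msd^l_i(s, G)`: `s` is not strictly dominated on `G` by any mixed strategy in
`Δ G_i` (a distribution over the current restriction). -/
def msdl {ι : Type u} [Fintype ι] [DecidableEq ι] {S : ι → Type u}
    [∀ i, Fintype (S i)] (p : ∀ i : ι, (∀ j, S j) → ℝ) (i : ι) (s : S i)
    (G : ∀ j, Set (S j)) : Prop :=
  ¬ ∃ m : S i → ℝ, IsDistOn (G i) m ∧
    ∀ t : ∀ j, S j, (∀ j, j ≠ i → t j ∈ G j) →
      p i (Function.update t i s) < mixedPayoff p i m t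

/-!
Under common belief of rationality every strategy `s` that is played in some state of the
common-belief event `C` is a best response to a belief concentrated on `G_C`, because the
player's information cell at that state lies inside `C`. A best response to a belief on `G` is
never strictly dominated on any `G' ⊇ G`: averaging the strict domination over the belief would
give the dominating mixture a higher expected payoff than `s`. Hence `G_C` survives every
elimination round, at successor and limit stages alike.
-/

section Iteration

variable {D : Type u} [CompleteLattice D] {T : D → D} {x : D}

theorem le_lfpIter_of_forall_le_imp_le_apply (hx : ∀ y, x ≤ y → x ≤ T y) (o : Ordinal.{u}) :
    x ≤ lfpIter T o := by
  induction o using Ordinal.limitRecOn with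
  | zero => simp only [lfpIter, Ordinal.limitRecOn_zero, le_top]
  | add_one o ih =>
    rw [lfpIter, Ordinal.limitRecOn_add_one]
    exact hx _ ih
  | limit o ho ih =>
    rw [lfpIter, Ordinal.limitRecOn_limit _ _ _ _ ho]
    exact le_iInf fun o' => ih o'.1 o'.2

theorem le_outcome_of_forall_le_imp_le_apply (hx : ∀ y, x ≤ y → x ≤ T y) :
    x ≤ outcome T :=
  le_lfpIter_of_forall_le_imp_le_apply hx _

end Iteration

section Belief

variable {ι Ω : Type u} {P : ι → Ω → Set Ω} {E : Set Ω}

theorem mem_of_mem_box (hP : ∀ i ω, ω ∈ P i ω) (i : ι) {ω : Ω} (h : ω ∈ box P E) :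
    ω ∈ E :=
  h i (hP i ω)

theorem commonBelief_subset_box : commonBelief P E ⊆ box P E := fun _ h => by
  simpa only [commonBelief, zero_add, Function.iterate_one] using mem_iInter.1 h 0

theorem commonBelief_subset_box_commonBelief : commonBelief P E ⊆ box P (commonBelief P E) :=
  fun _ h i _ hω' => mem_iInter.2 fun k => by
    have h' := mem_iInter.1 h (k + 1)
    rw [Function.iterate_succ_apply'] at h'
    exact h' i hω'

end Belief

section Distribution

variable {α : Type u} [Fintype α] {A : Set α} {m : α → ℝ}

theorem IsDistOn.mono (hm : IsDistOn A m) {B : Set α} (hAB : A ⊆ B) : IsDistOn B m :=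
  ⟨hm.1, hm.2.1, fun s hs => hAB (hm.2.2 s hs)⟩

theorem IsDistOn.sum_mul_le (hm : IsDistOn A m) {f : α → ℝ} {c : ℝ} (hf : ∀ s, f s ≤ c) :
    ∑ s, m s * f s ≤ c :=
  calc ∑ s, m s * f s ≤ ∑ s, m s * c :=
        Finset.sum_le_sum fun s _ => mul_le_mul_of_nonneg_left (hf s) (hm.1 s)
    _ = c := by rw [← Finset.sum_mul, hm.2.1, one_mul]

theorem IsDistOn.sum_mul_lt_sum_mul (hm : IsDistOn A m) {f g : α → ℝ}
    (hfg : ∀ s ∈ A, f s < g s) : ∑ s, m s * f s < ∑ s, m s * g s := by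
  obtain ⟨s₀, hs₀⟩ : ∃ s, m s ≠ 0 := by
    by_contra! h
    simpa [h] using hm.2.1
  refine Finset.sum_lt_sum (fun s _ => ?_) ⟨s₀, Finset.mem_univ _, ?_⟩
  · by_cases hs : m s = 0
    · simp [hs]
    · exact mul_le_mul_of_nonneg_left (hfg s (hm.2.2 s hs)).le (hm.1 s)
  · exact mul_lt_mul_of_pos_left (hfg s₀ (hm.2.2 s₀ hs₀)) ((hm.1 s₀).lt_of_ne' hs₀)

theorem isDistOn_prod {κ : Type u} [Fintype κ] [DecidableEq κ] {β : κ → Type u}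
    [∀ k, Fintype (β k)] {A : ∀ k, Set (β k)} {μ : ∀ k, β k → ℝ}
    (hμ : ∀ k, IsDistOn (A k) (μ k)) :
    IsDistOn (univ.pi A) fun t => ∏ k, μ k (t k) := by
  refine ⟨fun t => Finset.prod_nonneg fun k _ => (hμ k).1 (t k), ?_, fun t ht k _ => ?_⟩
  · rw [← Fintype.piFinset_univ, ← Finset.prod_univ_sum]
    exact Finset.prod_eq_one fun k _ => (hμ k).2.1
  · exact (hμ k).2.2 (t k) (Finset.prod_ne_zero_iff.1 ht k (Finset.mem_univ k))

end Distribution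

section Profiles

variable {ι : Type u} [DecidableEq ι] {S : ι → Type u} {i : ι}

theorem extProf_of_ne (s : S i) (t : ∀ j : {j : ι // j ≠ i}, S j.1) {j : ι} (hj : j ≠ i) :
    extProf i s t j = t ⟨j, hj⟩ :=
  dif_neg hj

theorem update_extProf (s s' : S i) (t : ∀ j : {j : ι // j ≠ i}, S j.1) :
    Function.update (extProf i s t) i s' = extProf i s' t := by
  funext j
  by_cases h : j = i
  · subst h
    simp [extProf]
  · rw [Function.update_of_ne h, extProf_of_ne _ _ h, extProf_of_ne _ _ h]

end Profiles

section Dominance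

variable {ι : Type u} [Fintype ι] [DecidableEq ι] {S : ι → Type u} [∀ i, Fintype (S i)]
  (p : ∀ i : ι, (∀ j, S j) → ℝ) {i : ι}

theorem brgMixed_mono {s : S i} {G G' : ∀ j, Set (S j)} (hGG' : G ≤ G')
    (h : brgMixed p i s G) : brgMixed p i s G' :=
  let ⟨μ, hμ, hbest⟩ := h
  ⟨μ, fun j hj => (hμ j hj).mono (hGG' j), hbest⟩

theorem msdl_of_brgMixed {s : S i} {G : ∀ j, Set (S j)} (h : brgMixed p i s G) :
    msdl p i s G := by
  obtain ⟨μ, hμ, hbest⟩ := h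
  rintro ⟨m, hm, hdom⟩
  have hw := isDistOn_prod fun j : {j : ι // j ≠ i} => hμ j.1 j.2
  have hdom' : ∀ t ∈ univ.pi fun j : {j : ι // j ≠ i} => G j.1,
      p i (extProf i s t) < ∑ s', m s' * p i (extProf i s' t) := by
    intro t ht
    simpa only [mixedPayoff, update_extProf] using
      hdom (extProf i s t) fun j hj => (extProf_of_ne s t hj).symm ▸ ht ⟨j, hj⟩ trivial
  have hexp : jointMixedPayoff p i s μ < jointMixedPayoff p i s μ :=
    calc jointMixedPayoff p i s μ
        < ∑ t, (∏ j, μ j.1 (t j)) * ∑ s', m s' * p i (extProf i s' t) :=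
          hw.sum_mul_lt_sum_mul hdom'
      _ = ∑ s', m s' * jointMixedPayoff p i s' μ := by
          simp only [jointMixedPayoff, Finset.mul_sum]
          rw [Finset.sum_comm]
          exact Finset.sum_congr rfl fun _ _ => Finset.sum_congr rfl fun _ _ => by ring
      _ ≤ jointMixedPayoff p i s μ := hm.sum_mul_le hbest
  exact hexp.false

theorem le_Topr_msdl {G G' : ∀ j, Set (S j)} (hG : ∀ i, ∀ s ∈ G i, brgMixed p i s G)
    (hGG' : G ≤ G') : G ≤ Topr (msdl p) G' :=
  fun i s hs => ⟨hGG' i hs, msdl_of_brgMixed p (brgMixed_mono p hGG' (hG i s hs))⟩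

end Dominance

theorem restr_commonKnowledge_RAT_brgMixed_le_outcome_msdl_general {ι : Type u}
    [Fintype ι] [DecidableEq ι] {S : ι → Type u} [∀ i, Fintype (S i)]
    (p : ∀ i : ι, (∀ j, S j) → ℝ)
    {Ω : Type u} (sb : ∀ i, Ω → S i) (P : ι → Ω → Set Ω)
    (hP3 : ∀ i ω, ω ∈ P i ω) :
    restrOf sb (commonBelief P (RAT (brgMixed p) sb P)) ≤ outcome (Topr (msdl p)) := by
  refine le_outcome_of_forall_le_imp_le_apply fun G hG => le_Topr_msdl p ?_ hG
  rintro i _ ⟨ω, hω, rfl⟩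
  have hrat : ω ∈ RAT (brgMixed p) sb P := mem_of_mem_box hP3 i (commonBelief_subset_box hω)
  have hcell : P i ω ⊆ commonBelief P (RAT (brgMixed p) sb P) :=
    commonBelief_subset_box_commonBelief hω i
  exact brgMixed_mono p (fun j => image_mono hcell) (hrat i)

/-- assume the initial game `H` is finite. For every knowledge model
for `H`, `G_{K*RAT(br^g)} ⊆ T_{msd^l}^∞`: common knowledge that each player plays a
best response (within `H_i`, to some joint mixed strategy of the opponents he
considers possible) implies that the players choose only strategies surviving the
iterated elimination of strategies strictly dominated by a mixed strategy. -/
theorem restr_commonKnowledge_RAT_brgMixed_le_outcome_msdl {ι : Type u}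
    [Fintype ι] [DecidableEq ι] {S : ι → Type u} [∀ i, Fintype (S i)]
    [∀ i, Nonempty (S i)] (p : ∀ i : ι, (∀ j, S j) → ℝ)
    {Ω : Type u} [Nonempty Ω] (sb : ∀ i, Ω → S i) (P : ι → Ω → Set Ω)
    (hP1 : ∀ i ω, (P i ω).Nonempty)
    (hP2 : ∀ i ω ω', ω' ∈ P i ω → P i ω' = P i ω)
    (hP3 : ∀ i ω, ω ∈ P i ω) :
    restrOf sb (commonBelief P (RAT (brgMixed p) sb P)) ≤ outcome (Topr (msdl p)) :=
  restr_commonKnowledge_RAT_brgMixed_le_outcome_msdl_general p sb P hP3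
end

section
/- Let each φ_i be monotonic, let (Ω, s̄_1, …, s̄_n, P_1, …, P_n) be a belief model for H, and let F be an evident event with F ⊆ □RAT(φ). Then the restriction G_{F ∩ RAT(φ)} is a post-fixpoint of T_φ, i.e., G_{F ∩ RAT(φ)} ⊆ T_φ(G_{F ∩ RAT(φ)}), and hence G_{F ∩ RAT(φ)} ⊆ T_φ^∞. -/
/-!
Epistemic analysis of arbitrary strategic games. The initial game `H` has
players `ι`, strategy sets `S i` (the full types, all nonempty) and payoff
functions `p i`. A restriction of `H` is a family `G : ∀ i, Set (S i)`,
ordered componentwise; this is a complete lattice with largest element `⊤ = H`.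
-/

open Set

universe u

lemma post_le_lfpIter {D : Type u} [CompleteLattice D] {T : D → D}
    (hT : Monotone T) {G : D} (hG : G ≤ T G) : ∀ o, G ≤ lfpIter T o := by
  intro o
  induction o using Ordinal.induction with
  | h o ih =>
    rcases Ordinal.zero_or_succ_or_isSuccLimit o with h | ⟨a, rfl⟩ | h
    · subst h; rw [lfpIter, Ordinal.limitRecOn_zero]; exact le_top
    · rw [lfpIter, Ordinal.limitRecOn_succ]
      exact hG.trans (hT (ih a (Order.lt_succ a)))
    · rw [lfpIter, Ordinal.limitRecOn_limit _ _ _ _ h]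
      exact le_iInf fun o' => ih o'.1 o'.2

/-- key step of Theorem epist1(i): let each `φ_i` be monotonic, let
`(Ω, s̄, P)` be a belief model for `H`, and let `F` be an evident event
(`F ⊆ □F`) with `F ⊆ □RAT(φ)`. Then `G_{F ∩ RAT(φ)}` is a post-fixpoint of `T_φ`,
i.e. `G_{F ∩ RAT(φ)} ⊆ T_φ(G_{F ∩ RAT(φ)})`, and hence `G_{F ∩ RAT(φ)} ⊆ T_φ^∞`. -/
theorem restr_evident_inter_RAT_postfixpoint {ι : Type u} {S : ι → Type u}
    [∀ i, Nonempty (S i)] (p : ∀ i : ι, (∀ j, S j) → ℝ)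
    {Ω : Type u} [Nonempty Ω] (sb : ∀ i, Ω → S i) (P : ι → Ω → Set Ω)
    (hP1 : ∀ i ω, (P i ω).Nonempty)
    (hP2 : ∀ i ω ω', ω' ∈ P i ω → P i ω' = P i ω)
    (φ : ∀ i, S i → (∀ j, Set (S j)) → Prop)
    (hmono : ∀ i (s : S i) (G G' : ∀ j, Set (S j)), G ≤ G' → φ i s G → φ i s G')
    (F : Set Ω) (hFev : F ⊆ box P F) (hFrat : F ⊆ box P (RAT φ sb P)) :
    restrOf sb (F ∩ RAT φ sb P) ≤ Topr φ (restrOf sb (F ∩ RAT φ sb P)) ∧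
    restrOf sb (F ∩ RAT φ sb P) ≤ outcome (Topr φ) := by
  have hTmono : Monotone (Topr φ) := by
    intro G G' hGG' i s hs
    exact ⟨hGG' i hs.1, hmono i s G G' hGG' hs.2⟩
  have hpost : restrOf sb (F ∩ RAT φ sb P) ≤ Topr φ (restrOf sb (F ∩ RAT φ sb P)) := by
    intro i s hs
    rcases hs with ⟨ω, ⟨hωF, hωR⟩, rfl⟩
    refine ⟨⟨ω, ⟨hωF, hωR⟩, rfl⟩, ?_⟩
    refine hmono i _ _ _ ?_ (hωR i)
    intro j x hx
    rcases hx with ⟨ω', hω', rfl⟩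
    exact ⟨ω', ⟨hFev hωF i hω', hFrat hωF i hω'⟩, rfl⟩
  exact ⟨hpost, post_le_lfpIter hTmono hpost _⟩
end
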